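/- Let n ≥ 1 and let β be a connected permutation of {1,…,2n} (i.e., some cycle of β contains both an element of {1,…,n} and an element of {n+1,…,2n}). Then |γ_{n,n}⁻¹β| + |β| ≥ 2n. -/

import Mathlib

/-!
For a permutation `σ` of a finite set of size `m`, `cycleCount σ` is the number of cycles
(fixed points count as cycles) and `permLen σ = m - cycleCount σ` (the minimal number of
transpositions needed to write `σ`).  We model `{1,…,2n}` as `Fin n ⊕ Fin n`, the first
summand being `{1,…,n}` and the second `{n+1,…,2n}`.  `gammaNN n` is the product of the
two `n`-cycles `(1,2,…,n)` and `(n+1,…,2n)`.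
-/

/-- The number of cycles of a permutation, where fixed points count as cycles. -/
noncomputable def cycleCount {α : Type*} [Fintype α] [DecidableEq α]
    (σ : Equiv.Perm α) : ℕ :=
  Multiset.card σ.cycleType + (Fintype.card α - σ.support.card)

/-- `|σ| = m - #(σ)`, the minimal number of transpositions whose product is `σ`. -/
noncomputable def permLen {α : Type*} [Fintype α] [DecidableEq α]
    (σ : Equiv.Perm α) : ℕ :=
  Fintype.card α - cycleCount σ

/-- `γ_{n,n}`: the product of the two `n`-cycles `(1,…,n)` and `(n+1,…,2n)`. -/
def gammaNN (n : ℕ) : Equiv.Perm (Fin n ⊕ Fin n) :=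
  Equiv.sumCongr (finRotate n) (finRotate n)

/-- A permutation of `{1,…,2n}` is connected if some cycle of it contains both an
element of `{1,…,n}` and an element of `{n+1,…,2n}`. -/
def IsConnectedPerm {n : ℕ} (β : Equiv.Perm (Fin n ⊕ Fin n)) : Prop :=
  ∃ a b : Fin n, β.SameCycle (Sum.inl a) (Sum.inr b)

/-! Left multiplication by a transposition `(a b)` splits the cycle through `a` and `b` if
there is one and merges the two cycles through them otherwise: `ρ` and `(a b) ρ` give the same
partition once the classes of `a` and `b` are glued, and their signs forbid equally many cycles.
Hence `|πρ| ≤ |π| + |ρ|` with equal parity, and in case of equality every step merges, so the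
cycles of `ρ` lie inside those of `πρ`. For `γ⁻¹ = (γ⁻¹β) β⁻¹` equality is impossible, as a cycle
of `β` meets both halves and no cycle of `γ` does; so `|γ⁻¹β| + |β| ≥ |γ| + 2 ≥ 2n`, `γ` having
at most two cycles. -/

open Equiv Equiv.Perm Finset

namespace Setoid

variable {α : Type*}

def glue (r : Setoid α) (a b : α) : Setoid α where
  r x y := r x y ∨ ((r x a ∨ r x b) ∧ (r y a ∨ r y b))
  iseqv.refl x := .inl (r.refl x)
  iseqv.symm := fun h => h.imp r.symm And.symm
  iseqv.trans := by
    rintro x y z (hxy | ⟨hx, hy⟩) (hyz | ⟨hy', hz⟩)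
    · exact .inl (r.trans hxy hyz)
    · exact .inr ⟨hy'.imp (r.trans hxy) (r.trans hxy), hz⟩
    · exact .inr ⟨hx, hy.imp (r.trans (r.symm hyz)) (r.trans (r.symm hyz))⟩
    · exact .inr ⟨hx, hz⟩

variable {r t : Setoid α} {a b : α}

theorem le_glue : r ≤ r.glue a b := fun _ _ => .inl

theorem glue_le_iff : r.glue a b ≤ t ↔ r ≤ t ∧ t a b := by
  refine ⟨fun h => ⟨le_glue.trans h, h (.inr ⟨.inl (r.refl a), .inr (r.refl b)⟩)⟩, ?_⟩
  rintro ⟨hrt, hab⟩ x y (hxy | ⟨hx, hy⟩)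
  · exact hrt hxy
  · have rel_a : ∀ {z}, r z a ∨ r z b → t z a := fun hz =>
      hz.elim (fun h => hrt h) (fun h => t.trans (hrt h) (t.symm hab))
    exact t.trans (rel_a hx) (t.symm (rel_a hy))

theorem glue_eq_self (h : r a b) : r.glue a b = r :=
  le_antisymm (glue_le_iff.2 ⟨le_rfl, h⟩) le_glue

theorem card_quotient_glue_add_one [Finite α] (h : ¬ r a b) :
    Nat.card (Quotient (r.glue a b)) + 1 = Nat.card (Quotient r) := by
  classical
  let φ : {q : Quotient r // q ≠ ⟦b⟧} → Quotient (r.glue a b) :=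
    fun q => Quotient.map' id (fun _ _ => Or.inl) q.1
  have hφ : Function.Bijective φ := by
    constructor
    · rintro ⟨⟨x⟩, hxb⟩ ⟨⟨y⟩, hyb⟩ hxy
      have hx : ¬ r x b := fun h => hxb (Quotient.sound h)
      have hy : ¬ r y b := fun h => hyb (Quotient.sound h)
      refine Subtype.ext (Quotient.sound ?_)
      rcases Quotient.exact hxy with hxy | ⟨hx', hy'⟩
      · exact hxy
      · exact r.trans (hx'.resolve_right hx) (r.symm (hy'.resolve_right hy))
    · rintro ⟨z⟩
      by_cases hz : r z b
      · refine ⟨⟨⟦a⟧, fun hab => h (Quotient.exact hab)⟩, Quotient.sound ?_⟩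
        exact .inr ⟨.inl (r.refl a), .inr hz⟩
      · exact ⟨⟨⟦z⟧, fun hzb => hz (Quotient.exact hzb)⟩, rfl⟩
  rw [← Nat.card_eq_of_bijective φ hφ, ← Finite.card_option,
    Nat.card_congr (Equiv.optionSubtypeNe _)]

end Setoid

theorem modEq_two_of_neg_one_pow_eq {m k : ℕ} (h : (-1 : ℤˣ) ^ m = (-1) ^ k) : m ≡ k [MOD 2] := by
  rw [Int.units_pow_eq_pow_mod_two, Int.units_pow_eq_pow_mod_two _ k] at h
  rcases Nat.mod_two_eq_zero_or_one m with hm | hm <;>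
    rcases Nat.mod_two_eq_zero_or_one k with hk | hk <;>
    simp_all [Nat.ModEq]

namespace Equiv.Perm

variable {α : Type*}

theorem sameCycle_setoid_le {f : Perm α} {t : Setoid α} (h : ∀ x, t x (f x)) :
    SameCycle.setoid f ≤ t := by
  rintro x _ ⟨k, rfl⟩
  induction k using Int.induction_on with
  | zero => exact t.refl x
  | succ k ih =>
    rw [add_comm, zpow_one_add, mul_apply]
    exact t.trans ih (h _)
  | pred k ih =>
    rw [sub_eq_neg_add, zpow_add, zpow_neg_one, mul_apply]
    refine t.trans ih (t.symm ?_)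
    simpa using h (f⁻¹ ((f ^ (-(k : ℤ))) x))

variable [DecidableEq α]

theorem sameCycle_setoid_swap_mul_le_glue (a b : α) (ρ : Perm α) :
    SameCycle.setoid (swap a b * ρ) ≤ (SameCycle.setoid ρ).glue a b := by
  refine sameCycle_setoid_le fun x => ?_
  have hx : ρ.SameCycle x (ρ x) := sameCycle_apply_right.2 (SameCycle.refl ρ x)
  rw [mul_apply, swap_apply_def]
  split_ifs with ha hb
  · exact .inr ⟨.inl (ha ▸ hx), .inr (SameCycle.refl ρ b)⟩
  · exact .inr ⟨.inr (hb ▸ hx), .inl (SameCycle.refl ρ a)⟩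
  · exact .inl hx

theorem glue_sameCycle_setoid_swap_mul (a b : α) (ρ : Perm α) :
    (SameCycle.setoid (swap a b * ρ)).glue a b = (SameCycle.setoid ρ).glue a b := by
  have key : ∀ σ : Perm α, (SameCycle.setoid (swap a b * σ)).glue a b ≤
      (SameCycle.setoid σ).glue a b := fun σ =>
    Setoid.glue_le_iff.2 ⟨sameCycle_setoid_swap_mul_le_glue a b σ,
      .inr ⟨.inl (SameCycle.refl σ a), .inr (SameCycle.refl σ b)⟩⟩
  refine le_antisymm (key ρ) ?_
  simpa only [swap_mul_self_mul] using key (swap a b * ρ)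

variable [Fintype α]

theorem card_quotient_sameCycle (σ : Perm α) :
    Nat.card (Quotient (SameCycle.setoid σ)) = cycleCount σ := by
  let f : α → Perm α ⊕ α := fun x => if σ x = x then .inr x else .inl (σ.cycleOf x)
  have hker : SameCycle.setoid σ = Setoid.ker f := by
    ext x y
    change σ.SameCycle x y ↔ f x = f y
    by_cases hx : σ x = x <;> by_cases hy : σ y = y <;> simp only [f, hx, hy, if_true, if_false,
      reduceCtorEq, Sum.inr.injEq, Sum.inl.injEq, iff_false]
    · exact ⟨fun h => h.eq_of_left hx, fun h => h ▸ SameCycle.refl σ x⟩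
    · exact fun h => hy (h.apply_eq_self_iff.1 hx)
    · exact fun h => hx (h.apply_eq_self_iff.2 hy)
    · exact sameCycle_iff_cycleOf_eq_of_mem_support (mem_support.2 hx) (mem_support.2 hy)
  have hrange : Set.range f = ↑(σ.cycleFactorsFinset.disjSum (univ.filter fun x => σ x = x)) := by
    ext (p | x)
    · simp only [f, Set.mem_range, mem_coe, inl_mem_disjSum]
      constructor
      · rintro ⟨y, hy⟩
        split_ifs at hy with h
        cases Sum.inl.inj hy
        exact cycleOf_mem_cycleFactorsFinset_iff.2 (mem_support.2 h)
      · intro hp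
        obtain ⟨y, hy⟩ := (mem_cycleFactorsFinset_iff.1 hp).1.nonempty_support
        refine ⟨y, ?_⟩
        rw [if_neg (mem_support.1 (mem_cycleFactorsFinset_support_le hp hy)),
          ← cycle_is_cycleOf hy hp]
    · simp only [f, Set.mem_range, mem_coe, inr_mem_disjSum, mem_filter_univ]
      constructor
      · rintro ⟨y, hy⟩
        split_ifs at hy with h
        cases Sum.inr.inj hy
        exact h
      · exact fun h => ⟨x, if_pos h⟩
  rw [hker, Nat.card_congr (Setoid.quotientKerEquivRange f), hrange, Nat.card_coe_set_eq,
    Set.ncard_coe_finset, card_disjSum, cycleCount, cycleType_def, Multiset.card_map, ← card_compl]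
  congr 2
  ext x
  simp

theorem permLen_add_cycleCount (σ : Perm α) : permLen σ + cycleCount σ = Fintype.card α := by
  have : cycleCount σ ≤ Fintype.card α := by
    rw [← card_quotient_sameCycle, ← Nat.card_eq_fintype_card]
    exact Nat.card_le_card_of_surjective _ Quotient.mk''_surjective
  rw [permLen]
  omega

theorem cycleCount_inv (σ : Perm α) : cycleCount σ⁻¹ = cycleCount σ := by
  rw [cycleCount, cycleCount, cycleType_inv, support_inv]

theorem permLen_inv (σ : Perm α) : permLen σ⁻¹ = permLen σ := by
  rw [permLen, permLen, cycleCount_inv]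

theorem sign_eq_neg_one_pow_cycleCount (σ : Perm α) :
    sign σ = (-1) ^ (Fintype.card α + cycleCount σ) := by
  have hsupp : #σ.support ≤ Fintype.card α := card_le_univ _
  have : Fintype.card α + cycleCount σ =
      σ.cycleType.sum + Multiset.card σ.cycleType + 2 * (Fintype.card α - #σ.support) := by
    rw [sum_cycleType, cycleCount]
    omega
  rw [sign_of_cycleType, this, pow_add _ _ (2 * _), pow_mul, neg_one_sq, one_pow, mul_one]

theorem permLen_mul_modEq (π ρ : Perm α) : permLen (π * ρ) ≡ permLen π + permLen ρ [MOD 2] := by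
  have h := sign_mul π ρ
  rw [sign_eq_neg_one_pow_cycleCount, sign_eq_neg_one_pow_cycleCount,
    sign_eq_neg_one_pow_cycleCount, ← pow_add] at h
  have h1 := permLen_add_cycleCount (π * ρ)
  have h2 := permLen_add_cycleCount π
  have h3 := permLen_add_cycleCount ρ
  have := modEq_two_of_neg_one_pow_eq h
  unfold Nat.ModEq at *
  omega

theorem cycleCount_swap_mul_ne {a b : α} (hab : a ≠ b) (ρ : Perm α) :
    cycleCount (swap a b * ρ) ≠ cycleCount ρ := by
  intro h
  have hsign := sign_mul (swap a b) ρ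
  rw [sign_swap hab, sign_eq_neg_one_pow_cycleCount, sign_eq_neg_one_pow_cycleCount ρ, h,
    neg_one_mul] at hsign
  exact units_ne_neg_self _ hsign

theorem sameCycle_swap_mul_iff {a b : α} (hab : a ≠ b) (ρ : Perm α) :
    (swap a b * ρ).SameCycle a b ↔ ¬ ρ.SameCycle a b := by
  have hne := cycleCount_swap_mul_ne hab ρ
  rw [← card_quotient_sameCycle, ← card_quotient_sameCycle] at hne
  have hJ := glue_sameCycle_setoid_swap_mul a b ρ
  by_cases hρ : ρ.SameCycle a b
  · refine iff_of_false (fun hs => hne ?_) (not_not.2 hρ)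
    rw [← Setoid.glue_eq_self (r := SameCycle.setoid (swap a b * ρ)) hs, hJ,
      Setoid.glue_eq_self (r := SameCycle.setoid ρ) hρ]
  · refine iff_of_true (by_contra fun hs => hne ?_) hρ
    have hcard := Setoid.card_quotient_glue_add_one (r := SameCycle.setoid ρ) hρ
    rw [← hJ, Setoid.card_quotient_glue_add_one (r := SameCycle.setoid (swap a b * ρ)) hs] at hcard
    exact hcard

theorem cycleCount_swap_mul_of_sameCycle {a b : α} (hab : a ≠ b) {ρ : Perm α}
    (h : ρ.SameCycle a b) : cycleCount (swap a b * ρ) = cycleCount ρ + 1 := by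
  have hs : ¬ (swap a b * ρ).SameCycle a b := fun hs => (sameCycle_swap_mul_iff hab ρ).1 hs h
  rw [← card_quotient_sameCycle, ← card_quotient_sameCycle,
    ← Setoid.card_quotient_glue_add_one (r := SameCycle.setoid (swap a b * ρ)) hs,
    glue_sameCycle_setoid_swap_mul, Setoid.glue_eq_self (r := SameCycle.setoid ρ) h]

theorem cycleCount_swap_mul_of_not_sameCycle {a b : α} (hab : a ≠ b) {ρ : Perm α}
    (h : ¬ ρ.SameCycle a b) : cycleCount ρ = cycleCount (swap a b * ρ) + 1 := by
  simpa only [swap_mul_self_mul] using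
    cycleCount_swap_mul_of_sameCycle hab ((sameCycle_swap_mul_iff hab ρ).2 h)

theorem sameCycle_setoid_le_swap_mul {a b : α} (hab : a ≠ b) {ρ : Perm α}
    (h : ¬ ρ.SameCycle a b) : SameCycle.setoid ρ ≤ SameCycle.setoid (swap a b * ρ) :=
  calc SameCycle.setoid ρ ≤ (SameCycle.setoid ρ).glue a b := Setoid.le_glue
    _ = (SameCycle.setoid (swap a b * ρ)).glue a b := (glue_sameCycle_setoid_swap_mul a b ρ).symm
    _ = SameCycle.setoid (swap a b * ρ) := Setoid.glue_eq_self ((sameCycle_swap_mul_iff hab ρ).2 h)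

theorem exists_swap_mul_permLen_add_one {π : Perm α} (hπ : π ≠ 1) :
    ∃ a b, a ≠ b ∧ permLen (swap a b * π) + 1 = permLen π := by
  obtain ⟨x, hx⟩ : ∃ x, π x ≠ x := by
    by_contra! h
    exact hπ (Equiv.ext h)
  have hsplit :=
    cycleCount_swap_mul_of_sameCycle (Ne.symm hx) (sameCycle_apply_right.2 (SameCycle.refl π x))
  have h1 := permLen_add_cycleCount π
  have h2 := permLen_add_cycleCount (swap x (π x) * π)
  exact ⟨x, π x, Ne.symm hx, by omega⟩

theorem permLen_mul_le_and_refines_of_eq (π ρ : Perm α) :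
    permLen (π * ρ) ≤ permLen π + permLen ρ ∧
      (permLen (π * ρ) = permLen π + permLen ρ →
        SameCycle.setoid ρ ≤ SameCycle.setoid (π * ρ)) := by
  induction hk : permLen π using Nat.strong_induction_on generalizing π with
  | _ k ih =>
  by_cases hπ : π = 1
  · simp [hπ]
  obtain ⟨a, b, hab, hlen⟩ := exists_swap_mul_permLen_add_one hπ
  obtain ⟨tri, geo⟩ := ih _ (by omega) (swap a b * π) rfl
  have hprod : π * ρ = swap a b * (swap a b * π * ρ) := by
    rw [← mul_assoc, swap_mul_self_mul]
  rw [hprod]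
  have h1 := permLen_add_cycleCount (swap a b * π * ρ)
  have h2 := permLen_add_cycleCount (swap a b * (swap a b * π * ρ))
  by_cases hX : (swap a b * π * ρ).SameCycle a b
  · have := cycleCount_swap_mul_of_sameCycle hab hX
    exact ⟨by omega, fun h => absurd h (by omega)⟩
  · have := cycleCount_swap_mul_of_not_sameCycle hab hX
    exact ⟨by omega, fun h => (geo (by omega)).trans (sameCycle_setoid_le_swap_mul hab hX)⟩

end Equiv.Perm

theorem finRotate_sameCycle (n : ℕ) (u v : Fin n) : (finRotate n).SameCycle u v := by
  rcases n with _ | _ | n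
  · exact u.elim0
  · exact (Subsingleton.elim (α := Fin 1) u v).sameCycle _
  · exact isCycle_finRotate.sameCycle (by simp) (by simp)

theorem gammaNN_zpow (n : ℕ) (k : ℤ) :
    gammaNN n ^ k = Perm.sumCongr (finRotate n ^ k) (finRotate n ^ k) :=
  (map_zpow (sumCongrHom (Fin n) (Fin n)) (finRotate n, finRotate n) k).symm

theorem sameCycle_gammaNN_iff {n : ℕ} (x y : Fin n ⊕ Fin n) :
    (gammaNN n).SameCycle x y ↔ x.isLeft = y.isLeft := by
  refine ⟨fun ⟨k, hk⟩ => ?_, fun h => ?_⟩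
  · subst hk
    cases x <;> simp [gammaNN_zpow]
  · rcases x with u | u <;> rcases y with v | v <;> simp only [Sum.isLeft_inl, Sum.isLeft_inr,
      Bool.true_eq_false, Bool.false_eq_true] at h <;>
    obtain ⟨k, hk⟩ := finRotate_sameCycle n u v <;>
    exact ⟨k, by simp [gammaNN_zpow, hk]⟩

theorem cycleCount_gammaNN_le_two (n : ℕ) : cycleCount (gammaNN n) ≤ 2 := by
  have hker : SameCycle.setoid (gammaNN n) = Setoid.ker Sum.isLeft :=
    Setoid.ext sameCycle_gammaNN_iff
  rw [← card_quotient_sameCycle, hker, Nat.card_congr (Setoid.quotientKerEquivRange _)]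
  exact (Nat.card_le_card_of_injective _ Subtype.val_injective).trans_eq (by simp)

theorem connected_perm_length_bound_general (n : ℕ)
    (β : Equiv.Perm (Fin n ⊕ Fin n)) (hβ : IsConnectedPerm β) :
    2 * n ≤ permLen ((gammaNN n)⁻¹ * β) + permLen β := by
  obtain ⟨a, b, hab⟩ := hβ
  have hprod : (gammaNN n)⁻¹ * β * β⁻¹ = (gammaNN n)⁻¹ := mul_inv_cancel_right _ _
  obtain ⟨htri, hrefine⟩ := permLen_mul_le_and_refines_of_eq ((gammaNN n)⁻¹ * β) β⁻¹
  have hparity := permLen_mul_modEq ((gammaNN n)⁻¹ * β) β⁻¹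
  rw [hprod, permLen_inv, permLen_inv] at htri hrefine hparity
  have hne : permLen (gammaNN n) ≠ permLen ((gammaNN n)⁻¹ * β) + permLen β := fun h =>
    by simpa [sameCycle_gammaNN_iff] using sameCycle_inv.1 (hrefine h (sameCycle_inv.2 hab))
  have hγ := permLen_add_cycleCount (gammaNN n)
  have htwo := cycleCount_gammaNN_le_two n
  simp only [Fintype.card_sum, Fintype.card_fin] at hγ
  unfold Nat.ModEq at hparity
  omega

theorem connected_perm_length_bound (n : ℕ) (hn : 1 ≤ n)
    (β : Equiv.Perm (Fin n ⊕ Fin n)) (hβ : IsConnectedPerm β) :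
    2 * n ≤ permLen ((gammaNN n)⁻¹ * β) + permLen β :=
  connected_perm_length_bound_general n β hβ
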